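/- arXiv:2407.08152 — 2 statements merged into one kernel-verified Lean document; each statement's English description precedes it below -/
import Mathlib

section
/- Run the EP-MPD update: process levels d = 1, …, k in order; at each level, within each cluster, every client in the first half (group G₀) removes from its current set every element that also occurs in the current set of some client in the second half (group G₁) of the same cluster. After all k levels, the resulting sets S″₁, …, S″ₘ are pairwise disjoint. -/
/-- One level of the EP-MPD update: at level `d` (`d ≥ 1`), clients are grouped into
clusters (blocks of `2^d` consecutive 0-based indices); a client `i` in the first half
of its cluster (group `G₀`) removes every element occurring in the current set of some
client of the second half (group `G₁`) of the same cluster; `G₁` clients are unchanged. -/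
def epmpdStep {α : Type*} (m d : ℕ) (S : ℕ → Set α) : ℕ → Set α := fun i =>
  if (i / 2 ^ (d - 1)) % 2 = 0 then
    S i \ ⋃ j ∈ {j | j < m ∧ j / 2 ^ d = i / 2 ^ d ∧ (j / 2 ^ (d - 1)) % 2 = 1}, S j
  else S i

/-- The EP-MPD update after processing levels `1, …, d` in order. -/
def epmpdRun {α : Type*} (m : ℕ) (S : ℕ → Set α) : ℕ → (ℕ → Set α)
  | 0 => S
  | d + 1 => epmpdStep m (d + 1) (epmpdRun m S d)

lemma epmpdStep_subset {α : Type*} (m d : ℕ) (S : ℕ → Set α) (i : ℕ) :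
    epmpdStep m d S i ⊆ S i := by
  unfold epmpdStep
  split
  · exact Set.diff_subset
  · exact subset_rfl

lemma epmpd_key {α : Type*} (m : ℕ) (S : ℕ → Set α) (d : ℕ) :
    ∀ i j, i < m → j < m → i / 2 ^ d = j / 2 ^ d → i ≠ j →
      Disjoint (epmpdRun m S d i) (epmpdRun m S d j) := by
  induction d with
  | zero =>
    intro i j _ _ h hij
    simp at h
    exact absurd h hij
  | succ d ih =>
    intro i j hi hj hsame hij
    have hdiv : i / 2 ^ (d + 1) = (i / 2 ^ d) / 2 := by
      rw [pow_succ, Nat.div_div_eq_div_mul]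
    have hdivj : j / 2 ^ (d + 1) = (j / 2 ^ d) / 2 := by
      rw [pow_succ, Nat.div_div_eq_div_mul]
    by_cases hsub : i / 2 ^ d = j / 2 ^ d
    · -- same subcluster at level d: use IH and monotonicity
      have := ih i j hi hj hsub hij
      have h1 : epmpdRun m S (d+1) i ⊆ epmpdRun m S d i := epmpdStep_subset ..
      have h2 : epmpdRun m S (d+1) j ⊆ epmpdRun m S d j := epmpdStep_subset ..
      exact this.mono h1 h2
    · have hpar : (i / 2 ^ d) % 2 ≠ (j / 2 ^ d) % 2 := by
        intro h
        apply hsub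
        omega
      -- one has parity 0, other 1
      have hi2 := Nat.mod_two_eq_zero_or_one (i / 2 ^ d)
      have hj2 := Nat.mod_two_eq_zero_or_one (j / 2 ^ d)
      show Disjoint (epmpdStep m (d+1) (epmpdRun m S d) i) (epmpdStep m (d+1) (epmpdRun m S d) j)
      unfold epmpdStep
      simp only [Nat.add_sub_cancel]
      rcases hi2 with h0 | h1
      · have hj1 : (j / 2 ^ d) % 2 = 1 := by omega
        rw [if_pos h0, if_neg (by omega)]
        rw [Set.disjoint_left]
        intro x hx hxj
        exact hx.2 (Set.mem_biUnion ⟨hj, hsame.symm, hj1⟩ hxj)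
      · have hj0 : (j / 2 ^ d) % 2 = 0 := by omega
        rw [if_neg (by omega), if_pos hj0]
        rw [Set.disjoint_right]
        intro x hx hxi
        exact hx.2 (Set.mem_biUnion ⟨hi, hsame, h1⟩ hxi)

theorem stmt_10 {α : Type*} (k m : ℕ) (hm : m = 2 ^ k) (S : ℕ → Set α)
    (i j : ℕ) (hi : i < m) (hj : j < m) (hij : i ≠ j) :
    Disjoint (epmpdRun m S k i) (epmpdRun m S k j) := by
  apply epmpd_key m S k i j hi hj _ hij
  subst hm
  rw [Nat.div_eq_of_lt hi, Nat.div_eq_of_lt hj]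
end

section
/- Run the EP-MPD update as above for m = 2^k clients over k levels. After all levels, the union of the resulting sets S″₁, …, S″ₘ equals the union of the initial sets S₁, …, Sₘ. -/
lemma epmpdStep_union {α : Type*} (m d : ℕ) (S : ℕ → Set α) :
    (⋃ i ∈ Finset.range m, epmpdStep m d S i) = ⋃ i ∈ Finset.range m, S i := by
  apply Set.Subset.antisymm
  · refine Set.iUnion₂_subset fun i hi => ?_
    refine Set.subset_iUnion₂_of_subset i hi ?_
    unfold epmpdStep
    split
    · exact Set.diff_subset
    · exact le_refl _
  · refine Set.iUnion₂_subset fun i hi x hx => ?_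
    simp only [Finset.mem_range] at hi
    unfold epmpdStep
    by_cases h : (i / 2 ^ (d - 1)) % 2 = 0
    · by_cases hx' : x ∈ ⋃ j ∈ {j | j < m ∧ j / 2 ^ d = i / 2 ^ d ∧
          (j / 2 ^ (d - 1)) % 2 = 1}, S j
      · simp only [Set.mem_iUnion, Set.mem_setOf_eq] at hx'
        obtain ⟨j, ⟨hjm, _, hj1⟩, hxj⟩ := hx'
        refine Set.mem_biUnion (Finset.mem_range.mpr hjm) ?_
        rw [if_neg (by omega)]
        exact hxj
      · refine Set.mem_biUnion (Finset.mem_range.mpr hi) ?_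
        simp only [h, if_pos]
        exact ⟨hx, hx'⟩
    · refine Set.mem_biUnion (Finset.mem_range.mpr hi) ?_
      simp only [if_neg h]
      exact hx

theorem stmt_11 {α : Type*} (k m : ℕ) (hm : m = 2 ^ k) (S : ℕ → Set α) :
    (⋃ i ∈ Finset.range m, epmpdRun m S k i) = ⋃ i ∈ Finset.range m, S i := by
  clear hm
  induction k with
  | zero => rfl
  | succ d ih =>
    calc (⋃ i ∈ Finset.range m, epmpdRun m S (d + 1) i)
        = ⋃ i ∈ Finset.range m, epmpdStep m (d + 1) (epmpdRun m S d) i := rfl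
      _ = ⋃ i ∈ Finset.range m, epmpdRun m S d i := epmpdStep_union ..
      _ = ⋃ i ∈ Finset.range m, S i := ih
end
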